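/- With the notation of the context, for every particle array v ∈ Z^{T·M} and every index path k ∈ {1,…,M}^T one has ψ(s_{1,k}(v)) · Ĉ(s_{1,k}(v)) = ψ(v) · Ĉ(v); that is, the particle-filter density reweighted by the normalising-constant estimator is invariant under swapping the first path with the path indexed by k. -/

import Mathlib

open MeasureTheory Finset

namespace SSM13

variable {Z : Type*}

/-- The swap operator `s_{1,k}`. -/
def swapArr (n m : ℕ) (k : Fin (n + 1) → Fin (m + 1))
    (v : Fin (n + 1) → Fin (m + 1) → Z) : Fin (n + 1) → Fin (m + 1) → Z :=
  fun t i => v t (Equiv.swap 0 (k t) i)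

/-- The particle-filter density `ψ(v)`. -/
noncomputable def psiPF (n m : ℕ) (m₀ : Z → ℝ) (f : Z → Z → ℝ)
    (w : Fin (n + 1) → Z → ℝ) (v : Fin (n + 1) → Fin (m + 1) → Z) : ℝ :=
  (∏ i, m₀ (v 0 i)) *
    ∏ t : Fin n, ∏ i : Fin (m + 1),
      (∑ j, w t.castSucc (v t.castSucc j) * f (v t.castSucc j) (v t.succ i)) /
        ∑ j, w t.castSucc (v t.castSucc j)

/-- The normalising-constant estimator `Ĉ(v)`. -/
noncomputable def Chat (n m : ℕ) (w : Fin (n + 1) → Z → ℝ)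
    (v : Fin (n + 1) → Fin (m + 1) → Z) : ℝ :=
  ∏ t, ((m : ℝ) + 1)⁻¹ * ∑ i, w t (v t i)

section Permutation

variable (n m : ℕ) (v : Fin (n + 1) → Fin (m + 1) → Z)
    (σ : Fin (n + 1) → Equiv.Perm (Fin (m + 1)))

theorem Chat_comp_perm (w : Fin (n + 1) → Z → ℝ) :
    Chat n m w (fun t i => v t (σ t i)) = Chat n m w v := by
  unfold Chat
  refine prod_congr rfl fun t _ => ?_
  rw [Equiv.sum_comp (σ t) fun i => w t (v t i)]

theorem psiPF_comp_perm (m₀ : Z → ℝ) (f : Z → Z → ℝ) (w : Fin (n + 1) → Z → ℝ) :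
    psiPF n m m₀ f w (fun t i => v t (σ t i)) = psiPF n m m₀ f w v := by
  unfold psiPF
  congr 1
  · exact Equiv.prod_comp (σ 0) fun i => m₀ (v 0 i)
  · refine prod_congr rfl fun t _ => ?_
    dsimp only
    set x := v t.castSucc
    set a := w t.castSucc
    have hmix : ∀ y, ∑ j, a (x (σ t.castSucc j)) * f (x (σ t.castSucc j)) y
        = ∑ j, a (x j) * f (x j) y :=
      fun y => Equiv.sum_comp (σ t.castSucc) fun j => a (x j) * f (x j) y
    simp only [hmix, Equiv.sum_comp (σ t.castSucc) fun j => a (x j)]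
    exact Equiv.prod_comp (σ t.succ) fun i =>
      (∑ j, a (x j) * f (x j) (v t.succ i)) / ∑ j, a (x j)

end Permutation

theorem psi_Chat_swap_invariance_general
    (n m : ℕ)
    (m₀ : Z → ℝ) (f : Z → Z → ℝ) (w : Fin (n + 1) → Z → ℝ)
    (v : Fin (n + 1) → Fin (m + 1) → Z) (k : Fin (n + 1) → Fin (m + 1)) :
    psiPF n m m₀ f w (swapArr n m k v) * Chat n m w (swapArr n m k v)
      = psiPF n m m₀ f w v * Chat n m w v := by
  have hswap : swapArr n m k v = fun t i => v t (Equiv.swap 0 (k t) i) := rfl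
  rw [hswap, psiPF_comp_perm, Chat_comp_perm]

/-- For every particle array `v` and index path `k`,
`ψ(s_{1,k}(v)) · Ĉ(s_{1,k}(v)) = ψ(v) · Ĉ(v)`. -/
theorem psi_Chat_swap_invariance
    [MeasurableSpace Z] (n m : ℕ)
    (m₀ : Z → ℝ) (f : Z → Z → ℝ) (w : Fin (n + 1) → Z → ℝ)
    (hm₀ : Measurable m₀) (hf : Measurable fun p : Z × Z => f p.1 p.2)
    (hw : ∀ t, Measurable (w t))
    (hm₀pos : ∀ z, 0 < m₀ z) (hfpos : ∀ z z', 0 < f z z') (hwpos : ∀ t z, 0 < w t z)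
    (v : Fin (n + 1) → Fin (m + 1) → Z) (k : Fin (n + 1) → Fin (m + 1)) :
    psiPF n m m₀ f w (swapArr n m k v) * Chat n m w (swapArr n m k v)
      = psiPF n m m₀ f w v * Chat n m w v :=
  psi_Chat_swap_invariance_general n m m₀ f w v k

end SSM13
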